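/- If the φ-product is associative on stochastic exponentials, then for all f, g, h ∈ L²([0,T]): φ(⟨f,g⟩)·φ(⟨f+g,h⟩) = φ(⟨f,g+h⟩)·φ(⟨g,h⟩). In particular, choosing f ⊥ g, the continuous function φ with φ(0)=1 satisfies φ(s+t) = φ(s)φ(t) for all s, t in the range of inner products, hence φ(x) = e^{αx} for some α ∈ ℝ. -/

import Mathlib

/-!
With `⟨u, v⟩ = ∫ u v`, the two identities for stochastic exponentials make every φ-product of
exponentials a multiple `φ⟨u,v⟩ e^{⟨u,v⟩} ℰ(u+v)` of an exponential. Evaluating both bracketings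
of a triple product at one point and cancelling the positive value of `ℰ(f+g+h)` leaves the
identity for `φ`, because the exponential factors agree by bilinearity. For `f ⊥ g` it reads
`φ(s+t) = φ s φ t`; a continuous solution with `φ 0 = 1` is positive, so `log ∘ φ` is a
continuous additive map, hence linear.
-/

open MeasureTheory

section Exponential

variable {φ : ℝ → ℝ}

theorem pos_of_map_add_eq_mul (hφ0 : φ 0 = 1) (hmul : ∀ s t, φ (s + t) = φ s * φ t)
    (x : ℝ) : 0 < φ x := by
  have hne : φ (x / 2) ≠ 0 := fun h0 => by
    simpa [h0, hφ0] using hmul (x / 2) (-(x / 2))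
  simpa [← hmul] using mul_self_pos.mpr hne

theorem exists_eq_exp_mul_of_map_add_eq_mul (hφcont : Continuous φ) (hφ0 : φ 0 = 1)
    (hmul : ∀ s t, φ (s + t) = φ s * φ t) : ∃ α : ℝ, ∀ x, φ x = Real.exp (α * x) := by
  have hpos := pos_of_map_add_eq_mul hφ0 hmul
  let ψ : ℝ →+ ℝ := AddMonoidHom.mk' (fun x => Real.log (φ x)) fun x y => by
    rw [hmul, Real.log_mul (hpos x).ne' (hpos y).ne']
  have hψ : Continuous ψ := hφcont.log fun x => (hpos x).ne'
  refine ⟨Real.log (φ 1), fun x => ?_⟩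
  have hlin : Real.log (φ x) = x * Real.log (φ 1) := by
    simpa [ψ] using map_real_smul ψ hψ x 1
  rw [← Real.exp_log (hpos x), hlin, mul_comm]

end Exponential

section PhiProduct

variable {α Ω : Type*} [MeasurableSpace α] {μ : Measure α} {φ : ℝ → ℝ}
  {E : (α → ℝ) → Ω → ℝ} {prodφ : (Ω → ℝ) → (Ω → ℝ) → Ω → ℝ} {f g h : α → ℝ}

theorem integral_add_mul_of_memLp_two
    (hf : MemLp f 2 μ) (hg : MemLp g 2 μ) (hh : MemLp h 2 μ) :
    ∫ x, (f x + g x) * h x ∂μ = (∫ x, f x * h x ∂μ) + ∫ x, g x * h x ∂μ := by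
  simp only [add_mul]
  exact integral_add (hf.integrable_mul hh) (hg.integrable_mul hh)

theorem integral_mul_add_of_memLp_two
    (hf : MemLp f 2 μ) (hg : MemLp g 2 μ) (hh : MemLp h 2 μ) :
    ∫ x, f x * (g x + h x) ∂μ = (∫ x, f x * g x ∂μ) + ∫ x, f x * h x ∂μ := by
  simp only [mul_add]
  exact integral_add (hf.integrable_mul hg) (hf.integrable_mul hh)

variable
  (hprod : ∀ f g : α → ℝ, MemLp f 2 μ → MemLp g 2 μ →
    prodφ (E f) (E g) = fun ω => φ (∫ s, f s * g s ∂μ) * (E f ω * E g ω))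
  (hEmul : ∀ f g : α → ℝ, MemLp f 2 μ → MemLp g 2 μ →
    (fun ω => E f ω * E g ω) = fun ω => E (f + g) ω * Real.exp (∫ s, f s * g s ∂μ))
include hprod hEmul

theorem prodφ_eq_smul (hf : MemLp f 2 μ) (hg : MemLp g 2 μ) :
    prodφ (E f) (E g)
      = (φ (∫ x, f x * g x ∂μ) * Real.exp (∫ x, f x * g x ∂μ)) • E (f + g) := by
  rw [hprod f g hf hg]
  funext ω
  rw [Pi.smul_apply, smul_eq_mul, congrFun (hEmul f g hf hg) ω]
  ring

theorem prodφ_prodφ_left_eq_smul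
    (hsmul : ∀ (c : ℝ) (X Y : Ω → ℝ), prodφ (c • X) Y = c • prodφ X Y)
    (hf : MemLp f 2 μ) (hg : MemLp g 2 μ) (hh : MemLp h 2 μ) :
    prodφ (prodφ (E f) (E g)) (E h)
      = ((φ (∫ x, f x * g x ∂μ) * Real.exp (∫ x, f x * g x ∂μ))
          * (φ (∫ x, (f x + g x) * h x ∂μ) * Real.exp (∫ x, (f x + g x) * h x ∂μ)))
        • E (f + g + h) := by
  rw [prodφ_eq_smul hprod hEmul hf hg, hsmul,
    prodφ_eq_smul hprod hEmul (hf.add hg) hh, smul_smul]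
  rfl

theorem prodφ_prodφ_right_eq_smul
    (hsmul : ∀ (c : ℝ) (X Y : Ω → ℝ), prodφ X (c • Y) = c • prodφ X Y)
    (hf : MemLp f 2 μ) (hg : MemLp g 2 μ) (hh : MemLp h 2 μ) :
    prodφ (E f) (prodφ (E g) (E h))
      = ((φ (∫ x, g x * h x ∂μ) * Real.exp (∫ x, g x * h x ∂μ))
          * (φ (∫ x, f x * (g x + h x) ∂μ) * Real.exp (∫ x, f x * (g x + h x) ∂μ)))
        • E (f + (g + h)) := by
  rw [prodφ_eq_smul hprod hEmul hg hh, hsmul,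
    prodφ_eq_smul hprod hEmul hf (hg.add hh), smul_smul]
  rfl

theorem phi_mul_phi_eq_of_prodφ_assoc (ω : Ω) (hEpos : ∀ u, 0 < E u ω)
    (hsmul : ∀ (c : ℝ) (X Y : Ω → ℝ),
      prodφ (c • X) Y = c • prodφ X Y ∧ prodφ X (c • Y) = c • prodφ X Y)
    (hf : MemLp f 2 μ) (hg : MemLp g 2 μ) (hh : MemLp h 2 μ)
    (hassoc : prodφ (prodφ (E f) (E g)) (E h) = prodφ (E f) (prodφ (E g) (E h))) :
    φ (∫ x, f x * g x ∂μ) * φ (∫ x, (f x + g x) * h x ∂μ)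
      = φ (∫ x, f x * (g x + h x) ∂μ) * φ (∫ x, g x * h x ∂μ) := by
  have hω := congrFun hassoc ω
  rw [prodφ_prodφ_left_eq_smul hprod hEmul (fun c X Y => (hsmul c X Y).1) hf hg hh,
    prodφ_prodφ_right_eq_smul hprod hEmul (fun c X Y => (hsmul c X Y).2) hf hg hh,
    ← add_assoc] at hω
  have hcoef := mul_right_cancel₀ (hEpos (f + g + h)).ne' hω
  have hsum : (∫ x, f x * g x ∂μ) + ∫ x, (f x + g x) * h x ∂μ
      = (∫ x, f x * (g x + h x) ∂μ) + ∫ x, g x * h x ∂μ := by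
    rw [integral_add_mul_of_memLp_two hf hg hh, integral_mul_add_of_memLp_two hf hg hh]
    ring
  set a := ∫ x, f x * g x ∂μ
  set b := ∫ x, (f x + g x) * h x ∂μ
  set c := ∫ x, f x * (g x + h x) ∂μ
  set d := ∫ x, g x * h x ∂μ
  have hexp : Real.exp a * Real.exp b = Real.exp c * Real.exp d := by
    rw [← Real.exp_add, ← Real.exp_add, hsum]
  have hφexp :
      (φ a * φ b) * (Real.exp a * Real.exp b) = (φ c * φ d) * (Real.exp a * Real.exp b) := by
    linear_combination hcoef - φ c * φ d * hexp
  exact mul_right_cancel₀ (by positivity) hφexp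

end PhiProduct

theorem phi_product_associative_functional_equation_general
    {Ω : Type*} [MeasureSpace Ω] [IsProbabilityMeasure (volume : Measure Ω)]
    (T : ℝ)
    (φ : ℝ → ℝ) (hφcont : Continuous φ) (hφ0 : φ 0 = 1)
    (E : (ℝ → ℝ) → Ω → ℝ)
    (prodφ : (Ω → ℝ) → (Ω → ℝ) → Ω → ℝ)
    (hprod : ∀ f g : ℝ → ℝ, MemLp f 2 (volume.restrict (Set.Icc (0:ℝ) T)) →
      MemLp g 2 (volume.restrict (Set.Icc (0:ℝ) T)) →
      prodφ (E f) (E g)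
        = fun ω => φ (∫ s in Set.Icc (0:ℝ) T, f s * g s) * (E f ω * E g ω))
    (hsmul : ∀ (c : ℝ) (X Y : Ω → ℝ),
      prodφ (c • X) Y = c • prodφ X Y ∧ prodφ X (c • Y) = c • prodφ X Y)
    (hEmul : ∀ f g : ℝ → ℝ, MemLp f 2 (volume.restrict (Set.Icc (0:ℝ) T)) →
      MemLp g 2 (volume.restrict (Set.Icc (0:ℝ) T)) →
      (fun ω => E f ω * E g ω)
        = fun ω => E (f + g) ω * Real.exp (∫ s in Set.Icc (0:ℝ) T, f s * g s))
    (hEpos : ∀ (f : ℝ → ℝ) (ω : Ω), 0 < E f ω)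
    (hrange : ∀ s t : ℝ, ∃ f g h : ℝ → ℝ,
      MemLp f 2 (volume.restrict (Set.Icc (0:ℝ) T)) ∧
      MemLp g 2 (volume.restrict (Set.Icc (0:ℝ) T)) ∧
      MemLp h 2 (volume.restrict (Set.Icc (0:ℝ) T)) ∧
      (∫ x in Set.Icc (0:ℝ) T, f x * g x) = 0 ∧
      (∫ x in Set.Icc (0:ℝ) T, f x * h x) = s ∧
      (∫ x in Set.Icc (0:ℝ) T, g x * h x) = t)
    (hassoc : ∀ f g h : ℝ → ℝ,
      MemLp f 2 (volume.restrict (Set.Icc (0:ℝ) T)) →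
      MemLp g 2 (volume.restrict (Set.Icc (0:ℝ) T)) →
      MemLp h 2 (volume.restrict (Set.Icc (0:ℝ) T)) →
      prodφ (prodφ (E f) (E g)) (E h) = prodφ (E f) (prodφ (E g) (E h))) :
    (∀ f g h : ℝ → ℝ,
      MemLp f 2 (volume.restrict (Set.Icc (0:ℝ) T)) →
      MemLp g 2 (volume.restrict (Set.Icc (0:ℝ) T)) →
      MemLp h 2 (volume.restrict (Set.Icc (0:ℝ) T)) →
      φ (∫ x in Set.Icc (0:ℝ) T, f x * g x) *
          φ (∫ x in Set.Icc (0:ℝ) T, (f x + g x) * h x)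
        = φ (∫ x in Set.Icc (0:ℝ) T, f x * (g x + h x)) *
            φ (∫ x in Set.Icc (0:ℝ) T, g x * h x)) ∧
    (∀ s t : ℝ, φ (s + t) = φ s * φ t) ∧
    (∃ α : ℝ, ∀ x : ℝ, φ x = Real.exp (α * x)) := by
  obtain ⟨ω⟩ : Nonempty Ω := nonempty_of_isProbabilityMeasure volume
  have hcocycle := fun f g h (hf : MemLp f 2 (volume.restrict (Set.Icc (0:ℝ) T))) hg hh =>
    phi_mul_phi_eq_of_prodφ_assoc hprod hEmul ω (hEpos · ω) hsmul hf hg hh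
      (hassoc f g h hf hg hh)
  have hmul : ∀ s t : ℝ, φ (s + t) = φ s * φ t := by
    intro s t
    obtain ⟨f, g, h, hf, hg, hh, hfg, hfh, hgh⟩ := hrange s t
    have := hcocycle f g h hf hg hh
    rwa [integral_add_mul_of_memLp_two hf hg hh, integral_mul_add_of_memLp_two hf hg hh,
      hfg, hfh, hgh, zero_add, hφ0, one_mul] at this
  exact ⟨hcocycle, hmul, exists_eq_exp_mul_of_map_add_eq_mul hφcont hφ0 hmul⟩

/-- Theorem 3.3: if the `φ`-product is associative (here: associative on
stochastic exponentials, hypothesis `hassoc`), then for all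
`f, g, h ∈ L²([0,T])` one has
`φ(⟨f,g⟩)·φ(⟨f+g,h⟩) = φ(⟨f,g+h⟩)·φ(⟨g,h⟩)`; choosing `f ⊥ g`, the continuous
function `φ` with `φ(0) = 1` satisfies `φ(s+t) = φ(s)·φ(t)` for all `s, t`,
hence `φ(x) = exp(α·x)` for some `α ∈ ℝ`.  The hypotheses record:
`hprod`, the `φ`-product of exponentials `ℰ(f) ∘_φ ℰ(g) = φ(⟨f,g⟩)ℰ(f)ℰ(g)`;
`hsmul`, bilinearity in scalars; `hEmul`, `ℰ(f)ℰ(g) = ℰ(f+g)e^{⟨f,g⟩}`;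
`hEpos`, positivity of stochastic exponentials; and `hrange`, that an orthogonal
pair `f ⊥ g` with arbitrary prescribed inner products `⟨f,h⟩ = s`, `⟨g,h⟩ = t`
can always be found. -/
theorem phi_product_associative_functional_equation
    {Ω : Type*} [MeasureSpace Ω] [IsProbabilityMeasure (volume : Measure Ω)]
    (T : ℝ) (hT : 0 < T)
    (φ : ℝ → ℝ) (hφcont : Continuous φ) (hφ0 : φ 0 = 1)
    (E : (ℝ → ℝ) → Ω → ℝ)
    (prodφ : (Ω → ℝ) → (Ω → ℝ) → Ω → ℝ)
    (hprod : ∀ f g : ℝ → ℝ, MemLp f 2 (volume.restrict (Set.Icc (0:ℝ) T)) →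
      MemLp g 2 (volume.restrict (Set.Icc (0:ℝ) T)) →
      prodφ (E f) (E g)
        = fun ω => φ (∫ s in Set.Icc (0:ℝ) T, f s * g s) * (E f ω * E g ω))
    (hsmul : ∀ (c : ℝ) (X Y : Ω → ℝ),
      prodφ (c • X) Y = c • prodφ X Y ∧ prodφ X (c • Y) = c • prodφ X Y)
    (hEmul : ∀ f g : ℝ → ℝ, MemLp f 2 (volume.restrict (Set.Icc (0:ℝ) T)) →
      MemLp g 2 (volume.restrict (Set.Icc (0:ℝ) T)) →
      (fun ω => E f ω * E g ω)
        = fun ω => E (f + g) ω * Real.exp (∫ s in Set.Icc (0:ℝ) T, f s * g s))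
    (hEpos : ∀ (f : ℝ → ℝ) (ω : Ω), 0 < E f ω)
    (hrange : ∀ s t : ℝ, ∃ f g h : ℝ → ℝ,
      MemLp f 2 (volume.restrict (Set.Icc (0:ℝ) T)) ∧
      MemLp g 2 (volume.restrict (Set.Icc (0:ℝ) T)) ∧
      MemLp h 2 (volume.restrict (Set.Icc (0:ℝ) T)) ∧
      (∫ x in Set.Icc (0:ℝ) T, f x * g x) = 0 ∧
      (∫ x in Set.Icc (0:ℝ) T, f x * h x) = s ∧
      (∫ x in Set.Icc (0:ℝ) T, g x * h x) = t)
    (hassoc : ∀ f g h : ℝ → ℝ,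
      MemLp f 2 (volume.restrict (Set.Icc (0:ℝ) T)) →
      MemLp g 2 (volume.restrict (Set.Icc (0:ℝ) T)) →
      MemLp h 2 (volume.restrict (Set.Icc (0:ℝ) T)) →
      prodφ (prodφ (E f) (E g)) (E h) = prodφ (E f) (prodφ (E g) (E h))) :
    (∀ f g h : ℝ → ℝ,
      MemLp f 2 (volume.restrict (Set.Icc (0:ℝ) T)) →
      MemLp g 2 (volume.restrict (Set.Icc (0:ℝ) T)) →
      MemLp h 2 (volume.restrict (Set.Icc (0:ℝ) T)) →
      φ (∫ x in Set.Icc (0:ℝ) T, f x * g x) *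
          φ (∫ x in Set.Icc (0:ℝ) T, (f x + g x) * h x)
        = φ (∫ x in Set.Icc (0:ℝ) T, f x * (g x + h x)) *
            φ (∫ x in Set.Icc (0:ℝ) T, g x * h x)) ∧
    (∀ s t : ℝ, φ (s + t) = φ s * φ t) ∧
    (∃ α : ℝ, ∀ x : ℝ, φ x = Real.exp (α * x)) :=
  phi_product_associative_functional_equation_general T φ hφcont hφ0 E prodφ hprod hsmul hEmul hEpos
    hrange hassoc
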